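/- arXiv:2412.20575 — 2 statements merged into one kernel-verified Lean document; each statement's English description precedes it below -/
import Mathlib

section
/- Let A be a symmetric positive semidefinite n×n matrix, U_0, ..., U_m ∈ ℝ^n, k_0, ..., k_{m-1} > 0 (variable time steps), and suppose (U_{n+1} - U_n)/k_n + A(U_{n+1} + U_n)/2 = g_n for each n. Then ⟨U_m, A U_m⟩ + ∑_{n=0}^{m-1} k_n (‖(U_{n+1}-U_n)/k_n‖² + ‖A(U_{n+1}+U_n)/2‖²) = ⟨U_0, A U_0⟩ + ∑_{n=0}^{m-1} k_n ‖g_n‖². -/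
/-!
Write the trapezoidal step as `g = D + S` with `D = (U' - U) / k` and `S = A (U' + U) / 2`.
Then `k ‖g‖² = k (‖D‖² + ‖S‖²) + 2 k ⟪D, S⟫`, and for symmetric `A` the cross term
`2 k ⟪D, S⟫ = ⟪U' - U, A (U' + U)⟫ = ⟪U', A U'⟫ - ⟪U, A U⟫` is an energy increment,
so summing over the steps telescopes.
-/

open Matrix

namespace Matrix

variable {ι R : Type*} [Fintype ι]

theorem IsSymm.dotProduct_mulVec_comm [CommSemiring R] {A : Matrix ι ι R} (hA : A.IsSymm)
    (v w : ι → R) : v ⬝ᵥ A *ᵥ w = w ⬝ᵥ A *ᵥ v := by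
  rw [dotProduct_mulVec, ← mulVec_transpose, hA.eq, dotProduct_comm]

theorem IsSymm.sub_dotProduct_mulVec_add [CommRing R] {A : Matrix ι ι R} (hA : A.IsSymm)
    (v w : ι → R) : (v - w) ⬝ᵥ A *ᵥ (v + w) = v ⬝ᵥ A *ᵥ v - w ⬝ᵥ A *ᵥ w := by
  rw [sub_dotProduct, mulVec_add, dotProduct_add, dotProduct_add,
    hA.dotProduct_mulVec_comm w v]
  ring

end Matrix

theorem sum_add_apply_sq {ι R : Type*} [Fintype ι] [CommSemiring R] (v w : ι → R) :
    ∑ i, (v + w) i ^ 2 = ∑ i, v i ^ 2 + ∑ i, w i ^ 2 + 2 * (v ⬝ᵥ w) := by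
  simp only [Pi.add_apply, dotProduct, Finset.mul_sum, ← Finset.sum_add_distrib]
  exact Finset.sum_congr rfl fun i _ ↦ by ring

theorem trapezoidal_step_energy {ι K : Type*} [Fintype ι] [Field K] [NeZero (2 : K)]
    {A : Matrix ι ι K} (hA : A.IsSymm) {k : K} (hk : k ≠ 0) (u u' : ι → K) :
    k * ∑ i, (k⁻¹ • (u' - u) + (2⁻¹ : K) • A *ᵥ (u' + u)) i ^ 2
      = k * (∑ i, (k⁻¹ • (u' - u)) i ^ 2 + ∑ i, ((2⁻¹ : K) • A *ᵥ (u' + u)) i ^ 2)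
        + (u' ⬝ᵥ A *ᵥ u' - u ⬝ᵥ A *ᵥ u) := by
  rw [sum_add_apply_sq, smul_dotProduct, dotProduct_smul, hA.sub_dotProduct_mulVec_add,
    smul_eq_mul, smul_eq_mul]
  field_simp

/-- Variable-step discrete maximal regularity equality for the trapezoidal scheme in `ℝ^n`
with a symmetric positive semidefinite matrix `A` and arbitrary data `g j` on step `j`. -/
theorem trapezoidal_maximal_regularity_variable_steps (n m : ℕ)
    (A : Matrix (Fin n) (Fin n) ℝ) (hA : A.PosSemidef)
    (k : ℕ → ℝ) (hk : ∀ j < m, 0 < k j) (U g : ℕ → (Fin n → ℝ))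
    (heq : ∀ j < m,
      (k j)⁻¹ • (U (j + 1) - U j) + (2⁻¹ : ℝ) • A.mulVec (U (j + 1) + U j) = g j) :
    U m ⬝ᵥ A.mulVec (U m)
        + ∑ j ∈ Finset.range m, k j *
            ((∑ i, ((k j)⁻¹ • (U (j + 1) - U j)) i ^ 2)
              + ∑ i, ((2⁻¹ : ℝ) • A.mulVec (U (j + 1) + U j)) i ^ 2)
      = U 0 ⬝ᵥ A.mulVec (U 0)
        + ∑ j ∈ Finset.range m, k j * ∑ i, (g j i) ^ 2 := by
  have hAsymm : A.IsSymm := isHermitian_iff_isSymm.1 hA.1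
  have step (j : ℕ) (hj : j ∈ Finset.range m) : k j * ∑ i, (g j i) ^ 2
      = k j * ((∑ i, ((k j)⁻¹ • (U (j + 1) - U j)) i ^ 2)
          + ∑ i, ((2⁻¹ : ℝ) • A *ᵥ (U (j + 1) + U j)) i ^ 2)
        + (U (j + 1) ⬝ᵥ A *ᵥ U (j + 1) - U j ⬝ᵥ A *ᵥ U j) := by
    rw [← heq j (Finset.mem_range.1 hj)]
    exact trapezoidal_step_energy hAsymm (hk j (Finset.mem_range.1 hj)).ne' _ _
  rw [Finset.sum_congr rfl step, Finset.sum_add_distrib,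
    Finset.sum_range_sub (fun j ↦ U j ⬝ᵥ A *ᵥ U j)]
  ring
end

section
/- (Maximal regularity for the continuous Galerkin cG(q) method, finite-dimensional, one step) Let A be a symmetric positive semidefinite n×n matrix, k > 0, and let Û : [0,k] → ℝ^n be a polynomial of degree ≤ q satisfying the pointwise equation Û'(t) + P_{q-1}(A Û)(t) = g(t) on [0,k], where P_{q-1} is the L²(0,k)-orthogonal projection onto polynomials of degree ≤ q−1 (acting componentwise) and g is a polynomial of degree ≤ q−1. Then ⟨Û(k), A Û(k)⟩ + ∫_0^k ‖Û'(t)‖² dt + ∫_0^k ‖P_{q-1}(AÛ)(t)‖² dt = ⟨Û(0), A Û(0)⟩ + ∫_0^k ‖g(t)‖² dt. -/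
open Polynomial Matrix

/-!
Squaring the equation `Û' + P(AÛ) = g` gives `‖g‖² = ‖Û'‖² + ‖P(AÛ)‖² + 2⟨Û', P(AÛ)⟩`.
Since `Û'` has degree `≤ q - 1`, the orthogonality of the projection turns the integrated
cross term into `∫ 2⟨Û', AÛ⟩`, and for symmetric `A` this integrand is the derivative of
`⟨Û, AÛ⟩`, so it integrates to `⟨Û(k), AÛ(k)⟩ - ⟨Û(0), AÛ(0)⟩`.
-/

open intervalIntegral Set

section Calculus

variable {𝕜 : Type*} [NontriviallyNormedField 𝕜] {ι κ : Type*} [Fintype ι]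

theorem HasDerivAt.dotProduct {u v : 𝕜 → ι → 𝕜} {u' v' : ι → 𝕜} {t : 𝕜}
    (hu : HasDerivAt u u' t) (hv : HasDerivAt v v' t) :
    HasDerivAt (fun s => u s ⬝ᵥ v s) (u' ⬝ᵥ v t + u t ⬝ᵥ v') t :=
  (HasDerivAt.fun_sum (u := Finset.univ) fun i _ =>
    (hasDerivAt_pi.1 hu i).mul (hasDerivAt_pi.1 hv i)).congr_deriv Finset.sum_add_distrib

theorem HasDerivAt.mulVec (A : Matrix κ ι 𝕜) {u : 𝕜 → ι → 𝕜} {u' : ι → 𝕜} {t : 𝕜}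
    (hu : HasDerivAt u u' t) : HasDerivAt (fun s => A *ᵥ u s) (A *ᵥ u') t :=
  hasDerivAt_pi.2 fun i =>
    ((hasDerivAt_const t (A i)).dotProduct hu).congr_deriv (by rw [zero_dotProduct, zero_add]; rfl)

theorem Matrix.IsSymm.hasDerivAt_dotProduct_mulVec_self {A : Matrix ι ι 𝕜} (hA : A.IsSymm)
    {u : 𝕜 → ι → 𝕜} {u' : ι → 𝕜} {t : 𝕜} (hu : HasDerivAt u u' t) :
    HasDerivAt (fun s => u s ⬝ᵥ A *ᵥ u s) (2 * (u' ⬝ᵥ A *ᵥ u t)) t := by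
  convert hu.dotProduct (hu.mulVec A) using 1
  rw [dotProduct_mulVec (u t), ← mulVec_transpose, hA.eq, dotProduct_comm (A *ᵥ u t), two_mul]

end Calculus

section Integrals

variable {ι : Type*} [Fintype ι] {a b : ℝ}

theorem Matrix.IsSymm.integral_two_mul_dotProduct_mulVec {A : Matrix ι ι ℝ} (hA : A.IsSymm)
    {u u' : ℝ → ι → ℝ} (hu : ∀ t, HasDerivAt u (u' t) t) (hu' : Continuous u') :
    ∫ t in a..b, 2 * (u' t ⬝ᵥ A *ᵥ u t) = u b ⬝ᵥ A *ᵥ u b - u a ⬝ᵥ A *ᵥ u a := by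
  have hu_cont : Continuous u := continuous_iff_continuousAt.2 fun t => (hu t).continuousAt
  exact integral_eq_sub_of_hasDerivAt (fun t _ => hA.hasDerivAt_dotProduct_mulVec_self (hu t))
    ((by fun_prop : Continuous fun t => 2 * (u' t ⬝ᵥ A *ᵥ u t)).intervalIntegrable _ _)

theorem integral_dotProduct_eq_of_integral_mul_sub_eq_zero {φ v w : ℝ → ι → ℝ}
    (hφ : Continuous φ) (hv : Continuous v) (hw : Continuous w)
    (h : ∀ i, ∫ t in a..b, φ t i * (v t i - w t i) = 0) :
    ∫ t in a..b, φ t ⬝ᵥ v t = ∫ t in a..b, φ t ⬝ᵥ w t := by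
  rw [← sub_eq_zero]
  calc (∫ t in a..b, φ t ⬝ᵥ v t) - ∫ t in a..b, φ t ⬝ᵥ w t
      = ∫ t in a..b, ∑ i, φ t i * (v t i - w t i) := by
        rw [← integral_sub ((hφ.dotProduct hv).intervalIntegrable _ _)
          ((hφ.dotProduct hw).intervalIntegrable _ _)]
        simp only [dotProduct, mul_sub, Finset.sum_sub_distrib]
    _ = ∑ i, ∫ t in a..b, φ t i * (v t i - w t i) :=
        integral_finsetSum fun i _ => Continuous.intervalIntegrable (by fun_prop) _ _
    _ = 0 := Finset.sum_eq_zero fun i _ => h i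

theorem integral_sum_sq_of_add_eq {u v w : ℝ → ι → ℝ} (hu : Continuous u) (hv : Continuous v)
    (huvw : EqOn (fun t => u t + v t) w (uIcc a b)) :
    ∫ t in a..b, ∑ i, w t i ^ 2 = (∫ t in a..b, ∑ i, u t i ^ 2)
      + (∫ t in a..b, ∑ i, v t i ^ 2) + 2 * ∫ t in a..b, u t ⬝ᵥ v t := by
  calc ∫ t in a..b, ∑ i, w t i ^ 2
      = ∫ t in a..b, (∑ i, u t i ^ 2) + (∑ i, v t i ^ 2) + 2 * u t ⬝ᵥ v t := by
        refine integral_congr fun t ht => ?_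
        simp only [← huvw ht, Pi.add_apply, dotProduct, Finset.mul_sum, ← Finset.sum_add_distrib]
        exact Finset.sum_congr rfl fun i _ => by ring
    _ = _ := by
        rw [integral_add, integral_add, integral_const_mul] <;>
          exact Continuous.intervalIntegrable (by fun_prop) _ _

end Integrals

theorem cG_one_step_maximal_regularity_general (n q : ℕ)
    (A : Matrix (Fin n) (Fin n) ℝ) (hA : A.PosSemidef)
    (k : ℝ) (hk : 0 < k) (Uh P g : Fin n → Polynomial ℝ)
    (hU : ∀ i, (Uh i).natDegree ≤ q)
    (hproj : ∀ φ : Polynomial ℝ, φ.natDegree ≤ q - 1 → ∀ i,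
      ∫ t in (0 : ℝ)..k,
        φ.eval t * ((A.mulVec fun j => (Uh j).eval t) i - (P i).eval t) = 0)
    (heq : ∀ i, ∀ t ∈ Set.Icc (0 : ℝ) k,
      (Polynomial.derivative (Uh i)).eval t + (P i).eval t = (g i).eval t) :
    (fun i => (Uh i).eval k) ⬝ᵥ A.mulVec (fun i => (Uh i).eval k)
        + (∫ t in (0 : ℝ)..k, ∑ i, ((Polynomial.derivative (Uh i)).eval t) ^ 2)
        + (∫ t in (0 : ℝ)..k, ∑ i, ((P i).eval t) ^ 2)
      = (fun i => (Uh i).eval 0) ⬝ᵥ A.mulVec (fun i => (Uh i).eval 0)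
        + ∫ t in (0 : ℝ)..k, ∑ i, ((g i).eval t) ^ 2 := by
  have hcont (p : Fin n → ℝ[X]) : Continuous fun t i => (p i).eval t :=
    continuous_pi fun i => (p i).continuous
  have henergy := (isHermitian_iff_isSymm.1 hA.1).integral_two_mul_dotProduct_mulVec
    (a := 0) (b := k) (fun t => hasDerivAt_pi.2 fun i => (Uh i).hasDerivAt t)
    (hcont fun i => derivative (Uh i))
  have horth := integral_dotProduct_eq_of_integral_mul_sub_eq_zero (a := 0) (b := k)
    (hcont fun i => derivative (Uh i)) (continuous_const.matrix_mulVec (hcont Uh)) (hcont P)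
    fun i => hproj _ ((natDegree_derivative_le _).trans (Nat.sub_le_sub_right (hU i) 1)) i
  have hsplit := integral_sum_sq_of_add_eq (hcont fun i => derivative (Uh i)) (hcont P)
    (w := fun t i => (g i).eval t) fun t ht =>
      funext fun i => heq i t (by rwa [uIcc_of_le hk.le] at ht)
  rw [integral_const_mul, horth] at henergy
  linarith

/-- One-step maximal regularity identity for the continuous Galerkin `cG(q)` method in
`ℝ^n`: if the polynomial `Û` (componentwise `Uh`) of degree `≤ q` satisfies
`Û' + P_{q-1}(A Û) = g` pointwise on `[0,k]`, where `P` is the `L²(0,k)`-projection of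
`A Û` onto polynomials of degree `≤ q−1` (characterized by orthogonality) and `g` has
degree `≤ q−1`, then the discrete energy identity holds. -/
theorem cG_one_step_maximal_regularity (n q : ℕ)
    (A : Matrix (Fin n) (Fin n) ℝ) (hA : A.PosSemidef)
    (k : ℝ) (hk : 0 < k) (Uh P g : Fin n → Polynomial ℝ)
    (hU : ∀ i, (Uh i).natDegree ≤ q) (hP : ∀ i, (P i).natDegree ≤ q - 1)
    (hg : ∀ i, (g i).natDegree ≤ q - 1)
    (hproj : ∀ φ : Polynomial ℝ, φ.natDegree ≤ q - 1 → ∀ i,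
      ∫ t in (0 : ℝ)..k,
        φ.eval t * ((A.mulVec fun j => (Uh j).eval t) i - (P i).eval t) = 0)
    (heq : ∀ i, ∀ t ∈ Set.Icc (0 : ℝ) k,
      (Polynomial.derivative (Uh i)).eval t + (P i).eval t = (g i).eval t) :
    (fun i => (Uh i).eval k) ⬝ᵥ A.mulVec (fun i => (Uh i).eval k)
        + (∫ t in (0 : ℝ)..k, ∑ i, ((Polynomial.derivative (Uh i)).eval t) ^ 2)
        + (∫ t in (0 : ℝ)..k, ∑ i, ((P i).eval t) ^ 2)
      = (fun i => (Uh i).eval 0) ⬝ᵥ A.mulVec (fun i => (Uh i).eval 0)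
        + ∫ t in (0 : ℝ)..k, ∑ i, ((g i).eval t) ^ 2 :=
  cG_one_step_maximal_regularity_general n q A hA k hk Uh P g hU hproj heq
end
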